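/- arXiv:1801.07638 — 4 statements merged into one kernel-verified Lean document; each statement's English description precedes it below -/
import Mathlib

section
/- For every integer ν ≥ 0 and every integer x, there exist pairs (a_0,b_0), (a_1,b_1), …, (a_ν,b_ν) of integers such that b_i − a_i = i for every i ∈ {0,…,ν}, and the set ⋃_{i=0}^{ν} {a_i, b_i} \ {a_0} ∪ {a_0} equals the interval of integers [x, x+2ν]; that is, the 2ν+1 integers a_0, a_1, b_1, …, a_ν, b_ν (with b_0 = a_0) are pairwise distinct except for b_0 = a_0, and {a_0} ∪ {a_i, b_i : 1 ≤ i ≤ ν} = [x, x+2ν]. -/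
/-- Auxiliary: left entry of the `i`-th pair of an explicit Skolem-type system on
`[x, x+2ν]`.  Odd differences are realized by nested pairs on the left part of the
interval, even differences by pairs centered at the hook point `x + 2⌈ν/2⌉ + ⌊ν/2⌋`. -/
def skA (ν : ℕ) (x : ℤ) (i : ℕ) : ℤ :=
  if i % 2 = 1 then x + (((ν+1)/2 : ℕ) : ℤ) - (((i+1)/2 : ℕ) : ℤ)
  else x + 2*(((ν+1)/2 : ℕ) : ℤ) + ((ν/2 : ℕ) : ℤ) - ((i/2 : ℕ) : ℤ)

/-- For every `ν ≥ 0` and every integer `x` there is a Skolem sequence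
`(a_0,b_0), …, (a_ν,b_ν)` covering the interval `[x, x+2ν]`: `b i - a i = i` for all
`i ≤ ν`, `b 0 = a 0`, the entries are pairwise distinct apart from `b 0 = a 0`, and
the set of all entries equals `[x, x+2ν]`. -/
theorem stmt_4 (ν : ℕ) (x : ℤ) :
    ∃ a b : ℕ → ℤ,
      (∀ i : ℕ, i ≤ ν → b i - a i = (i : ℤ)) ∧
      b 0 = a 0 ∧
      (∀ i j : ℕ, i ≤ ν → j ≤ ν → a i = a j → i = j) ∧
      (∀ i j : ℕ, i ≤ ν → j ≤ ν → b i = b j → i = j) ∧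
      (∀ i j : ℕ, i ≤ ν → j ≤ ν → a i = b j → i = 0 ∧ j = 0) ∧
      {z : ℤ | ∃ i : ℕ, i ≤ ν ∧ (z = a i ∨ z = b i)} = Set.Icc x (x + 2 * ν) := by
  refine ⟨skA ν x, fun i => skA ν x i + i, fun i _ => by ring, by simp, ?_, ?_, ?_, ?_⟩
  · intro i j hi hj h
    unfold skA at h
    by_cases hi2 : i % 2 = 1 <;> by_cases hj2 : j % 2 = 1 <;>
      simp only [hi2, hj2, if_true, if_false, if_pos, if_neg] at h <;> omega
  · intro i j hi hj h
    unfold skA at h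
    by_cases hi2 : i % 2 = 1 <;> by_cases hj2 : j % 2 = 1 <;>
      simp only [hi2, hj2, if_true, if_false, if_pos, if_neg] at h <;> omega
  · intro i j hi hj h
    unfold skA at h
    by_cases hi2 : i % 2 = 1 <;> by_cases hj2 : j % 2 = 1 <;>
      simp only [hi2, hj2, if_true, if_false, if_pos, if_neg] at h <;> omega
  · ext z
    simp only [Set.mem_setOf_eq, Set.mem_Icc]
    constructor
    · rintro ⟨i, hi, h | h⟩ <;> unfold skA at h <;> by_cases hi2 : i % 2 = 1 <;>
        simp only [hi2, if_true, if_false, if_pos, if_neg] at h <;> omega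
    · rintro ⟨h1, h2⟩
      obtain ⟨t, ht, ht2⟩ : ∃ t : ℕ, z = x + t ∧ t ≤ 2*ν :=
        ⟨(z-x).toNat, by omega, by omega⟩
      set A := (ν+1)/2 with hA
      set B := ν/2 with hB
      rcases lt_or_ge t A with h3 | h3
      · refine ⟨2*(A-t)-1, by omega, Or.inl ?_⟩
        have h4 : (2*(A-t)-1) % 2 = 1 := by omega
        unfold skA
        rw [if_pos h4]
        omega
      rcases lt_or_ge t (2*A) with h4 | h4
      · refine ⟨2*(t-A)+1, by omega, Or.inr ?_⟩
        have h5 : (2*(t-A)+1) % 2 = 1 := by omega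
        unfold skA
        rw [if_pos h5]
        push_cast
        omega
      rcases le_or_gt t (2*A+B) with h5 | h5
      · refine ⟨2*(2*A+B-t), by omega, Or.inl ?_⟩
        have h6 : (2*(2*A+B-t)) % 2 = 1 → False := by omega
        unfold skA
        rw [if_neg h6]
        omega
      · refine ⟨2*(t-(2*A+B)), by omega, Or.inr ?_⟩
        have h6 : (2*(t-(2*A+B))) % 2 = 1 → False := by omega
        unfold skA
        rw [if_neg h6]
        push_cast
        omega
end

section
/- For odd M ≥ 3, the graph C_M[2] (lexicographic product of an M-cycle with the empty graph on 2 vertices) admits no C_M-factorization, i.e., its edge set cannot be partitioned into spanning subgraphs each of which is a disjoint union of M-cycles covering all vertices. -/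
/-- The graph `C_M[2]`: vertex set `ℤ_M × ℤ_2`, with `(i,x)` adjacent to `(j,y)`
iff `j = i ± 1 (mod M)`. -/
def CM2 (M : ℕ) : SimpleGraph (ZMod M × ZMod 2) :=
  SimpleGraph.fromRel (fun p q => p.1 + 1 = q.1)

/-- A `C_ℓ`-factor: a 2-regular spanning subgraph all of whose connected
components have exactly `ℓ` vertices. -/
def IsCycleFactor {V : Type*} (H : SimpleGraph V) (ℓ : ℕ) : Prop :=
  (∀ v : V, (H.neighborSet v).ncard = 2) ∧
  (∀ c : H.ConnectedComponent, c.supp.ncard = ℓ)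

namespace Stmt10Aux

lemma zmod2_cases (x : ZMod 2) : x = 0 ∨ x = 1 := by revert x; decide

lemma zmod2_ne : ∀ {a b : ZMod 2}, a ≠ b → a = b + 1 := by decide

lemma val_succ {M : ℕ} [NeZero M] (hM : 1 < M) {a : ZMod M} (h : a + 1 ≠ 0) :
    (a + 1).val = a.val + 1 := by
  haveI : Fact (1 < M) := ⟨hM⟩
  have h1 : (a + 1).val = (a.val + 1) % M := by
    rw [ZMod.val_add, ZMod.val_one]
  have h2 : a.val < M := ZMod.val_lt a
  rcases lt_or_eq_of_le (Nat.succ_le_of_lt h2) with hlt | heq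
  · rw [h1, Nat.mod_eq_of_lt hlt]
  · exfalso
    apply h
    rw [Nat.succ_eq_add_one] at heq
    rw [← ZMod.val_eq_zero, h1, heq, Nat.mod_self]

/-- Key lemma: for a `C_M`-factor `F` of `C_M[2]` with `M` odd, there is a
"shift function" `d` describing the unique matching used between consecutive
columns, and `∑ d = 0`. -/
lemma key {M : ℕ} [NeZero M] (hM : 3 ≤ M) (hodd : Odd M)
    (F : SimpleGraph (ZMod M × ZMod 2)) (hle : F ≤ CM2 M)
    (hreg : ∀ v, (F.neighborSet v).ncard = 2)
    (hcomp : ∀ c : F.ConnectedComponent, c.supp.ncard = M) :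
    ∃ d : ZMod M → ZMod 2,
      (∀ i x y, F.Adj (i, x) (i + 1, y) → y = x + d i) ∧
      (∀ i x, F.Adj (i, x) (i + 1, x + d i)) ∧
      ∑ i : ZMod M, d i = 0 := by
  classical
  haveI : Fact (1 < M) := ⟨by omega⟩
  -- adjacency in CM2
  have hCM : ∀ {u w : ZMod M × ZMod 2}, F.Adj u w → w.1 = u.1 + 1 ∨ u.1 = w.1 + 1 := by
    intro u w h
    have h2 := hle h
    rw [CM2, SimpleGraph.fromRel_adj] at h2
    rcases h2.2 with h3 | h3
    · exact Or.inl h3.symm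
    · exact Or.inr h3.symm
  -- neighbor finsets
  have hfin : ∀ v : ZMod M × ZMod 2, (F.neighborSet v).Finite := fun v => Set.toFinite _
  set nbr : (ZMod M × ZMod 2) → Finset (ZMod M × ZMod 2) := fun v => (hfin v).toFinset with hnbrdef
  have hnbr_mem : ∀ v w, w ∈ nbr v ↔ F.Adj v w := by
    intro v w
    rw [hnbrdef]
    simp [Set.Finite.mem_toFinset, SimpleGraph.mem_neighborSet]
  have hnbr_card : ∀ v, (nbr v).card = 2 := by
    intro v
    rw [hnbrdef]
    rw [← Set.ncard_eq_toFinset_card]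
    exact hreg v
  -- each connected component has exactly one vertex in each column
  have hcol : ∀ (c : F.ConnectedComponent) (j0 : ZMod M),
      ∃! v : ZMod M × ZMod 2, v ∈ c.supp ∧ v.1 = j0 := by
    intro c j0
    have hSfin : c.supp.Finite := Set.toFinite _
    set sF := hSfin.toFinset with hsF
    have hsFcard : sF.card = M := by
      rw [hsF, ← Set.ncard_eq_toFinset_card]
      exact hcomp c
    have hmemsF : ∀ v, v ∈ sF ↔ F.connectedComponentMk v = c := by
      intro v
      rw [hsF, Set.Finite.mem_toFinset, SimpleGraph.ConnectedComponent.mem_supp_iff]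
    have hclo : ∀ u w, u ∈ sF → F.Adj u w → w ∈ sF := by
      intro u w hu hadj
      rw [hmemsF] at hu ⊢
      rw [← hu]
      exact SimpleGraph.ConnectedComponent.sound hadj.symm.reachable
    -- every column is met
    have hmeet : ∀ j : ZMod M, ∃ v ∈ sF, v.1 = j := by
      intro j
      by_contra hj
      push_neg at hj
      have hstep : ∀ u w, u ∈ sF → F.Adj u w →
          (Even ((w.1 - j).val) ↔ ¬ Even ((u.1 - j).val)) := by
        intro u w hu hadj
        have hw : w ∈ sF := hclo u w hu hadj
        have hu' : u.1 - j ≠ 0 := sub_ne_zero.mpr (hj u hu)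
        have hw' : w.1 - j ≠ 0 := sub_ne_zero.mpr (hj w hw)
        rcases hCM hadj with h | h
        · have he : w.1 - j = (u.1 - j) + 1 := by rw [h]; ring
          rw [he] at hw' ⊢
          rw [val_succ (by omega) hw', Nat.even_add_one]
        · have he : u.1 - j = (w.1 - j) + 1 := by rw [h]; ring
          rw [he] at hu' ⊢
          rw [val_succ (by omega) hu', Nat.even_add_one, not_not]
      set A := sF.filter (fun v => Even ((v.1 - j).val)) with hA
      set B := sF.filter (fun v => ¬ Even ((v.1 - j).val)) with hB
      have hABcard : A.card + B.card = M := by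
        rw [hA, hB, Finset.card_filter_add_card_filter_not, hsFcard]
      have hnbrA : ∀ v ∈ A, B.filter (fun w => F.Adj v w) = nbr v := by
        intro v hv
        rw [hA, Finset.mem_filter] at hv
        ext w
        rw [Finset.mem_filter, hnbr_mem, hB, Finset.mem_filter]
        constructor
        · rintro ⟨_, h⟩; exact h
        · intro h
          have hw : w ∈ sF := hclo v w hv.1 h
          have hiff := hstep v w hv.1 h
          exact ⟨⟨hw, fun hwE => (hiff.mp hwE) hv.2⟩, h⟩
      have hnbrB : ∀ w ∈ B, A.filter (fun v => F.Adj v w) = nbr w := by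
        intro w hw
        rw [hB, Finset.mem_filter] at hw
        ext v
        rw [Finset.mem_filter, hnbr_mem, hA, Finset.mem_filter]
        constructor
        · rintro ⟨_, h⟩; exact h.symm
        · intro h
          have hv : v ∈ sF := hclo w v hw.1 h
          have hiff := hstep w v hw.1 h
          exact ⟨⟨hv, hiff.mpr hw.2⟩, h.symm⟩
      have e1 : ∑ v ∈ A, (B.filter (fun w => F.Adj v w)).card = 2 * A.card := by
        rw [Finset.sum_congr rfl (fun v hv => by rw [hnbrA v hv, hnbr_card])]
        rw [Finset.sum_const, smul_eq_mul, mul_comm]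
      have e2 : ∑ w ∈ B, (A.filter (fun v => F.Adj v w)).card = 2 * B.card := by
        rw [Finset.sum_congr rfl (fun w hw => by rw [hnbrB w hw, hnbr_card])]
        rw [Finset.sum_const, smul_eq_mul, mul_comm]
      have e3 : ∑ v ∈ A, (B.filter (fun w => F.Adj v w)).card
          = ∑ w ∈ B, (A.filter (fun v => F.Adj v w)).card := by
        simp_rw [Finset.card_filter]
        exact Finset.sum_comm
      obtain ⟨t, ht⟩ := hodd
      omega
    -- column counts are all exactly 1
    have hcard1 : ∀ j : ZMod M, (sF.filter (fun v => v.1 = j)).card = 1 := by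
      have hge : ∀ j : ZMod M, 1 ≤ (sF.filter (fun v => v.1 = j)).card := by
        intro j
        obtain ⟨v, hv, hv1⟩ := hmeet j
        exact Finset.card_pos.mpr ⟨v, Finset.mem_filter.mpr ⟨hv, hv1⟩⟩
      have hsum : ∑ j : ZMod M, (sF.filter (fun v => v.1 = j)).card = M := by
        rw [← Finset.card_eq_sum_card_fiberwise (fun v _ => Finset.mem_univ v.1), hsFcard]
      by_contra hcon
      push_neg at hcon
      obtain ⟨j1, hj1⟩ := hcon
      have hlt : ∑ _j : ZMod M, 1 < ∑ j : ZMod M, (sF.filter (fun v => v.1 = j)).card :=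
        Finset.sum_lt_sum (fun j _ => hge j)
          ⟨j1, Finset.mem_univ j1, lt_of_le_of_ne (hge j1) (Ne.symm hj1)⟩
      rw [hsum, Finset.sum_const, smul_eq_mul, mul_one, Finset.card_univ, ZMod.card] at hlt
      omega
    obtain ⟨v, hv⟩ := Finset.card_eq_one.mp (hcard1 j0)
    have hvmem : v ∈ sF.filter (fun v => v.1 = j0) := by rw [hv]; exact Finset.mem_singleton_self v
    rw [Finset.mem_filter] at hvmem
    refine ⟨v, ⟨?_, hvmem.2⟩, ?_⟩
    · rw [← Set.Finite.mem_toFinset hSfin]; exact hvmem.1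
    · intro y hy
      have : y ∈ sF.filter (fun v => v.1 = j0) :=
        Finset.mem_filter.mpr ⟨(Set.Finite.mem_toFinset hSfin).mpr hy.1, hy.2⟩
      rw [hv, Finset.mem_singleton] at this
      exact this
  -- two distinct columns v.1+1 ≠ v.1-1
  have h2ne : ∀ a : ZMod M, a + 1 ≠ a - 1 := by
    intro a h
    have h2 : (2 : ZMod M) = 0 := by
      have : a + 1 - (a - 1) = 0 := by rw [h]; ring
      calc (2 : ZMod M) = a + 1 - (a - 1) := by ring
      _ = 0 := this
    have hv : ((2 : ℕ) : ZMod M).val = 2 := ZMod.val_cast_of_lt (by omega)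
    rw [show ((2 : ℕ) : ZMod M) = (2 : ZMod M) by push_cast; ring, h2, ZMod.val_zero] at hv
    omega
  -- unique neighbor in a prescribed adjacent column
  have hside : ∀ (v : ZMod M × ZMod 2) (t : ZMod M), (t = v.1 + 1 ∨ t = v.1 - 1) →
      ∃! w, F.Adj v w ∧ w.1 = t := by
    intro v t ht
    have hwc : ∀ w, F.Adj v w → w ∈ (F.connectedComponentMk v).supp := by
      intro w h
      rw [SimpleGraph.ConnectedComponent.mem_supp_iff]
      exact SimpleGraph.ConnectedComponent.sound h.symm.reachable
    have huniq : ∀ w y, F.Adj v w → F.Adj v y → w.1 = y.1 → w = y := by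
      intro w y hw hy h1
      obtain ⟨z, _, hzu⟩ := hcol (F.connectedComponentMk v) w.1
      rw [hzu w ⟨hwc w hw, rfl⟩, hzu y ⟨hwc y hy, h1.symm⟩]
    obtain ⟨w1, w2, hne, hN⟩ := Set.ncard_eq_two.mp (hreg v)
    have hw1 : F.Adj v w1 := by
      rw [← SimpleGraph.mem_neighborSet, hN]; exact Set.mem_insert w1 {w2}
    have hw2 : F.Adj v w2 := by
      rw [← SimpleGraph.mem_neighborSet, hN]; exact Set.mem_insert_of_mem w1 rfl
    have hcols : ∀ w, F.Adj v w → w.1 = v.1 + 1 ∨ w.1 = v.1 - 1 := by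
      intro w h
      rcases hCM h with h1 | h1
      · exact Or.inl h1
      · right; rw [h1]; ring
    have hne12 : w1.1 ≠ w2.1 := fun h => hne (huniq w1 w2 hw1 hw2 h)
    have hex : ∃ w, F.Adj v w ∧ w.1 = t := by
      rcases hcols w1 hw1 with h1 | h1 <;> rcases hcols w2 hw2 with h2 | h2
      · exact absurd (h1.trans h2.symm) hne12
      · rcases ht with h | h
        · exact ⟨w1, hw1, h1.trans h.symm⟩
        · exact ⟨w2, hw2, h2.trans h.symm⟩
      · rcases ht with h | h
        · exact ⟨w2, hw2, h2.trans h.symm⟩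
        · exact ⟨w1, hw1, h1.trans h.symm⟩
      · exact absurd (h1.trans h2.symm) hne12
    obtain ⟨w, hw⟩ := hex
    exact ⟨w, hw, fun y hy => huniq y w hy.1 hw.1 (hy.2.trans hw.2.symm)⟩
  -- the "next" function
  obtain ⟨Nf, hNf, hNfu⟩ : ∃ Nf : (ZMod M × ZMod 2) → (ZMod M × ZMod 2),
      (∀ v, F.Adj v (Nf v) ∧ (Nf v).1 = v.1 + 1) ∧
      (∀ v w, F.Adj v w → w.1 = v.1 + 1 → w = Nf v) :=
    ⟨fun v => (hside v (v.1 + 1) (Or.inl rfl)).choose,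
     fun v => (hside v (v.1 + 1) (Or.inl rfl)).choose_spec.1,
     fun v w h1 h2 => (hside v (v.1 + 1) (Or.inl rfl)).choose_spec.2 w ⟨h1, h2⟩⟩
  have hNinj : ∀ i : ZMod M, Nf (i, 0) ≠ Nf (i, 1) := by
    intro i h
    have h0 := hNf (i, (0 : ZMod 2))
    have h1 := hNf (i, (1 : ZMod 2))
    obtain ⟨z, _, hzu⟩ := hside (Nf (i, 1)) ((Nf (i, 1)).1 - 1) (Or.inr rfl)
    have c1 : i = (Nf (i, 1)).1 - 1 := by rw [h1.2]; ring
    have e0 : (i, (0 : ZMod 2)) = (i, (1 : ZMod 2)) := by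
      rw [hzu (i, (0 : ZMod 2)) ⟨by rw [h] at h0; exact h0.1.symm, c1⟩,
        hzu (i, (1 : ZMod 2)) ⟨h1.1.symm, c1⟩]
    have : (0 : ZMod 2) = 1 := congrArg Prod.snd e0
    exact absurd this (by decide)
  set d : ZMod M → ZMod 2 := fun i => (Nf (i, 0)).2 with hd
  have hshift : ∀ i x, (Nf (i, x)).2 = x + d i := by
    intro i x
    rcases zmod2_cases x with rfl | rfl
    · rw [zero_add]
    · have hne2 : (Nf (i, 1)).2 ≠ (Nf (i, 0)).2 := by
        intro h
        apply hNinj i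
        refine Prod.ext ?_ h.symm
        rw [(hNf (i, (0 : ZMod 2))).2, (hNf (i, (1 : ZMod 2))).2]
      have := zmod2_ne hne2
      rw [this, hd]
      ring
  refine ⟨d, ?_, ?_, ?_⟩
  · intro i x y h
    have he := hNfu (i, x) (i + 1, y) h rfl
    have := congrArg Prod.snd he
    simpa [hshift i x] using this
  · intro i x
    have h := (hNf (i, x)).1
    have he : Nf (i, x) = (i + 1, x + d i) := by
      refine Prod.ext ?_ (hshift i x)
      exact (hNf (i, x)).2
    rwa [he] at h
  · -- telescoping sum over the component of (0,0)
    set c0 := F.connectedComponentMk ((0 : ZMod M), (0 : ZMod 2)) with hc0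
    obtain ⟨g, hgs, hgu⟩ : ∃ g : ZMod M → (ZMod M × ZMod 2),
        (∀ j, g j ∈ c0.supp ∧ (g j).1 = j) ∧
        (∀ j v, v ∈ c0.supp ∧ v.1 = j → v = g j) :=
      ⟨fun j => (hcol c0 j).choose, fun j => (hcol c0 j).choose_spec.1,
       fun j v h => (hcol c0 j).choose_spec.2 v h⟩
    have hstep : ∀ i, (g (i + 1)).2 = (g i).2 + d i := by
      intro i
      have h1 : F.Adj (g i) (Nf (g i)) := (hNf (g i)).1
      have h2 : Nf (g i) ∈ c0.supp := by
        rw [SimpleGraph.ConnectedComponent.mem_supp_iff]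
        have hm := (hgs i).1
        rw [SimpleGraph.ConnectedComponent.mem_supp_iff] at hm
        rw [← hm]
        exact SimpleGraph.ConnectedComponent.sound h1.symm.reachable
      have h3 : Nf (g i) = g (i + 1) :=
        hgu (i + 1) _ ⟨h2, by rw [(hNf (g i)).2, (hgs i).2]⟩
      have h4 : g i = (i, (g i).2) := Prod.ext (hgs i).2 rfl
      calc (g (i + 1)).2 = (Nf (g i)).2 := by rw [h3]
      _ = (Nf (i, (g i).2)).2 := by rw [← h4]
      _ = (g i).2 + d i := hshift i _
    have hsum : ∑ i : ZMod M, d i = ∑ i : ZMod M, ((g (i + 1)).2 - (g i).2) := by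
      refine Finset.sum_congr rfl fun i _ => ?_
      rw [hstep i]; ring
    rw [hsum, Finset.sum_sub_distrib]
    have hbij : ∑ i : ZMod M, (g (i + 1)).2 = ∑ i : ZMod M, (g i).2 :=
      Fintype.sum_bijective _ (Equiv.addRight (1 : ZMod M)).bijective
        (fun i => (g (i + 1)).2) (fun i => (g i).2) (fun i => rfl)
    rw [hbij, sub_self]

end Stmt10Aux

/-- For odd `M ≥ 3`, the graph `C_M[2]` admits no
`C_M`-factorization. -/
theorem stmt_10 (M : ℕ) (hM : 3 ≤ M) (hodd : Odd M) :
    ¬ ∃ (k : ℕ) (F : Fin k → SimpleGraph (ZMod M × ZMod 2)),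
        (∀ i, IsCycleFactor (F i) M) ∧
        (∀ i j, i ≠ j → Disjoint (F i).edgeSet (F j).edgeSet) ∧
        (⋃ i, (F i).edgeSet) = (CM2 M).edgeSet := by
  rintro ⟨k, F, hfac, hdis, hcov⟩
  haveI : NeZero M := ⟨by omega⟩
  haveI : Fact (1 < M) := ⟨by omega⟩
  classical
  have hle : ∀ i, F i ≤ CM2 M := by
    intro i
    rw [← SimpleGraph.edgeSet_subset_edgeSet, ← hcov]
    exact Set.subset_iUnion (fun i => (F i).edgeSet) i
  have hadjC : ∀ (i : ZMod M) (x y : ZMod 2), (CM2 M).Adj (i, x) (i + 1, y) := by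
    intro i x y
    rw [CM2, SimpleGraph.fromRel_adj]
    refine ⟨?_, Or.inl rfl⟩
    intro h
    have h1 : i = i + 1 := congrArg Prod.fst h
    exact one_ne_zero (left_eq_add.mp h1)
  have hedge : ∀ (i : ZMod M) (x y : ZMod 2), ∃ a, (F a).Adj (i, x) (i + 1, y) := by
    intro i x y
    have hm : s((i, x), (i + 1, y)) ∈ (CM2 M).edgeSet := hadjC i x y
    rw [← hcov, Set.mem_iUnion] at hm
    exact hm
  obtain ⟨a0, ha0⟩ := hedge 0 0 0
  obtain ⟨d0, hd0u, hd0a, hd0s⟩ :=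
    Stmt10Aux.key hM hodd (F a0) (hle a0) (hfac a0).1 (hfac a0).2
  obtain ⟨a1, ha1⟩ := hedge 0 0 (d0 0 + 1)
  obtain ⟨d1, hd1u, hd1a, hd1s⟩ :=
    Stmt10Aux.key hM hodd (F a1) (hle a1) (hfac a1).1 (hfac a1).2
  have hane : a1 ≠ a0 := by
    rintro rfl
    have h := hd0u 0 0 _ ha1
    rw [zero_add] at h
    exact absurd (add_eq_left.mp h) (by decide)
  have hdd : ∀ i, d1 i = d0 i + 1 := by
    intro i
    have h1 : (F a1).Adj (i, 0) (i + 1, 0 + d1 i) := hd1a i 0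
    have h0 : (F a0).Adj (i, 0) (i + 1, 0 + d0 i) := hd0a i 0
    have hne : d1 i ≠ d0 i := by
      intro h
      have m1 : s(((i : ZMod M), (0 : ZMod 2)), (i + 1, 0 + d1 i)) ∈ (F a1).edgeSet := h1
      have m0 : s(((i : ZMod M), (0 : ZMod 2)), (i + 1, 0 + d1 i)) ∈ (F a0).edgeSet := by
        rw [h]; exact h0
      exact Set.disjoint_left.mp (hdis a1 a0 hane) m1 m0
    exact Stmt10Aux.zmod2_ne hne
  have hfinal : (0 : ZMod 2) = 1 := by
    calc (0 : ZMod 2) = ∑ i : ZMod M, d1 i := hd1s.symm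
    _ = ∑ i : ZMod M, (d0 i + 1) := Finset.sum_congr rfl fun i _ => hdd i
    _ = (∑ i : ZMod M, d0 i) + ∑ _i : ZMod M, (1 : ZMod 2) := Finset.sum_add_distrib
    _ = (M : ZMod 2) := by
        rw [hd0s, zero_add, Finset.sum_const, Finset.card_univ, ZMod.card,
          nsmul_eq_mul, mul_one]
    _ = 1 := by
        rw [← ZMod.natCast_mod M 2, Nat.odd_iff.mp hodd, Nat.cast_one]
  exact absurd hfinal (by decide)
end

section
/- For every M ≥ 3, the 4-regular graph C_M[2] admits a Hamiltonian factorization, i.e., its edge set can be partitioned into two Hamiltonian cycles (cycles of length 2M). -/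
/-- A Hamiltonian cycle factor: a connected 2-regular spanning subgraph,
i.e. a single cycle through all the vertices. -/
def IsHamiltonianCycleFactor {V : Type*} (H : SimpleGraph V) : Prop :=
  (∀ v : V, (H.neighborSet v).ncard = 2) ∧ H.Connected

open SimpleGraph

theorem IsHamiltonianCycleFactor.of_iso {V W : Type*} {G : SimpleGraph V} {H : SimpleGraph W}
    (f : G ≃g H) (hH : IsHamiltonianCycleFactor H) : IsHamiltonianCycleFactor G := by
  refine ⟨fun v => ?_, f.connected_iff.mpr hH.2⟩
  rw [← Nat.card_coe_set_eq, Nat.card_congr (f.mapNeighborSet v), Nat.card_coe_set_eq, hH.1]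

theorem isHamiltonianCycleFactor_cycleGraph {n : ℕ} (hn : 3 ≤ n) :
    IsHamiltonianCycleFactor (cycleGraph n) := by
  obtain ⟨k, rfl⟩ : ∃ k, n = k + 3 := ⟨n - 3, by omega⟩
  exact ⟨fun v => by rw [Set.ncard_eq_toFinset_card']; exact cycleGraph_degree_three_le,
    cycleGraph_connected⟩

theorem Nat.eq_add_one_mod_iff {n a b : ℕ} (ha : a < n) (hb : b < n) :
    b = (a + 1) % n ↔ b = a + 1 ∨ a + 1 = n ∧ b = 0 := by
  rcases Nat.lt_or_ge (a + 1) n with h | h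
  · rw [Nat.mod_eq_of_lt h]; omega
  · rw [show a + 1 = n by omega, Nat.mod_self]; omega

theorem ZMod.add_one_eq_iff_val {n : ℕ} [NeZero n] {a b : ZMod n} :
    a + 1 = b ↔ b.val = a.val + 1 ∨ a.val + 1 = n ∧ b.val = 0 := by
  rw [← Nat.eq_add_one_mod_iff a.val_lt b.val_lt, ← (ZMod.val_injective n).eq_iff, eq_comm,
    ZMod.val_add, ZMod.val_one_eq_one_mod, Nat.add_mod_mod]

theorem ZMod.eq_zero_or_eq_one : ∀ x : ZMod 2, x = 0 ∨ x = 1 := by decide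

theorem cycleGraph_adj_iff_val {n : ℕ} (hn : 2 ≤ n) {u v : Fin n} :
    (cycleGraph n).Adj u v ↔ v.val = (u.val + 1) % n ∨ u.val = (v.val + 1) % n := by
  obtain ⟨k, rfl⟩ : ∃ k, n = k + 2 := ⟨n - 2, by omega⟩
  rw [cycleGraph_adj, sub_eq_iff_eq_add', sub_eq_iff_eq_add', Fin.ext_iff, Fin.ext_iff,
    Fin.val_add, Fin.val_add, Fin.val_one]
  tauto

namespace CM2

variable {M : ℕ}

/-- `R a x y` says whether the edge `(a, x)(a + 1, y)` is kept. -/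
def ofRel (M : ℕ) (R : ZMod M → ZMod 2 → ZMod 2 → Prop) : SimpleGraph (ZMod M × ZMod 2) :=
  fromRel fun p q => p.1 + 1 = q.1 ∧ R p.1 p.2 q.2

theorem ofRel_le (R : ZMod M → ZMod 2 → ZMod 2 → Prop) : ofRel M R ≤ CM2 M :=
  fun _ _ h => ⟨h.1, h.2.imp And.left And.left⟩

theorem sdiff_ofRel (hM : 3 ≤ M) (R : ZMod M → ZMod 2 → ZMod 2 → Prop) :
    CM2 M \ ofRel M R = ofRel M fun a x y => ¬R a x y := by
  have htwo : (2 : ZMod M) ≠ 0 := by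
    rw [← Nat.cast_ofNat, Ne, ZMod.natCast_eq_zero_iff]
    exact fun h => by have := Nat.le_of_dvd two_pos h; omega
  ext p q
  have one_way : p.1 + 1 = q.1 → q.1 + 1 ≠ p.1 := fun h h' =>
    htwo (by linear_combination h + h')
  simp only [sdiff_adj, CM2, ofRel, fromRel_adj]
  grind

def fiberShift (g : ZMod M → ZMod 2) : ZMod M × ZMod 2 ≃ ZMod M × ZMod 2 :=
  (Equiv.refl _).prodShear fun a => Equiv.addRight (g a)

theorem comap_fiberShift_ofRel (g : ZMod M → ZMod 2) (R : ZMod M → ZMod 2 → ZMod 2 → Prop) :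
    (ofRel M R).comap (fiberShift g) = ofRel M fun a x y => R a (x + g a) (y + g (a + 1)) := by
  ext p q
  simp only [comap_adj, ofRel, fromRel_adj, fiberShift, Equiv.prodShear_apply, Equiv.refl_apply,
    Equiv.coe_addRight]
  grind

end CM2

section zigzag

variable {M : ℕ}

def zigzagRel (M : ℕ) (a : ZMod M) (x y : ZMod 2) : Prop :=
  if a = 0 then x = 0 else if a + 1 = 0 then y = 1 else x = y

theorem not_zigzagRel_iff [NeZero M] (a : ZMod M) (x y : ZMod 2) :
    ¬zigzagRel M a x y ↔
      zigzagRel M a (x + (a.val + 1 : ℕ)) (y + ((a + 1).val + 1 : ℕ)) := by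
  unfold zigzagRel
  split_ifs with h0 h1
  · subst h0; rw [ZMod.val_zero]; revert x; decide
  · rw [h1, ZMod.val_zero]; revert y; decide
  · have hval : (a + 1).val = a.val + 1 := by
      rcases (ZMod.add_one_eq_iff_val (b := a + 1)).mp rfl with h | ⟨-, h⟩
      · exact h
      · exact absurd ((ZMod.val_eq_zero _).mp h) h1
    rw [hval]
    push_cast
    generalize (a.val : ZMod 2) = c
    revert x y c; decide

-- The second lap of the zigzag cycle visits column `-k` at step `M + k`.
def zigzagPos (M : ℕ) (p : ZMod M × ZMod 2) : ℕ :=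
  if p.2 = 0 then p.1.val else M + (-p.1).val

variable [NeZero M]

theorem zigzagPos_lt (p : ZMod M × ZMod 2) : zigzagPos M p < 2 * M := by
  have := p.1.val_lt
  have := (-p.1).val_lt
  unfold zigzagPos
  split_ifs <;> omega

theorem zigzagPos_injective : Function.Injective (zigzagPos M) := by
  rintro ⟨a, x⟩ ⟨b, y⟩ h
  have ha := a.val_lt; have hb := b.val_lt
  obtain rfl | rfl := x.eq_zero_or_eq_one <;> obtain rfl | rfl := y.eq_zero_or_eq_one <;>
    simp only [zigzagPos, if_pos, one_ne_zero, if_false] at h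
  · rw [ZMod.val_injective M h]
  · omega
  · omega
  · rw [neg_injective (ZMod.val_injective M (Nat.add_left_cancel h))]

noncomputable def zigzag (M : ℕ) [NeZero M] : ZMod M × ZMod 2 ≃ Fin (2 * M) :=
  Equiv.ofBijective (fun p => ⟨zigzagPos M p, zigzagPos_lt p⟩) <|
    (Fintype.bijective_iff_injective_and_card _).mpr
      ⟨fun _ _ h => zigzagPos_injective (Fin.val_eq_of_eq h), by simp [mul_comm]⟩

theorem comap_zigzag_cycleGraph (hM : 3 ≤ M) :
    (cycleGraph (2 * M)).comap (zigzag M) = CM2.ofRel M (zigzagRel M) := by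
  ext ⟨a, x⟩ ⟨b, y⟩
  have ha := a.val_lt; have hb := b.val_lt
  have h0 : ∀ c : ZMod M, c = 0 ↔ c.val = 0 := fun c => (ZMod.val_eq_zero c).symm
  have hsucc0 : ∀ c : ZMod M, c + 1 = 0 ↔ c.val + 1 = M := fun c => by
    rw [ZMod.add_one_eq_iff_val, ZMod.val_zero]; omega
  have hext : (a, x) = (b, y) ↔ a.val = b.val ∧ x = y := by
    rw [Prod.mk.injEq, (ZMod.val_injective M).eq_iff]
  rw [comap_adj, cycleGraph_adj_iff_val (by omega)]
  simp only [zigzag, Equiv.ofBijective_apply]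
  rw [Nat.eq_add_one_mod_iff (zigzagPos_lt _) (zigzagPos_lt _),
    Nat.eq_add_one_mod_iff (zigzagPos_lt _) (zigzagPos_lt _)]
  simp only [CM2.ofRel, fromRel_adj, zigzagRel, ne_eq, hext, hsucc0, ZMod.add_one_eq_iff_val,
    zigzagPos, ZMod.neg_val, h0]
  obtain rfl | rfl := x.eq_zero_or_eq_one <;> obtain rfl | rfl := y.eq_zero_or_eq_one <;>
    simp only [if_pos, one_ne_zero, zero_ne_one, if_false] <;> split_ifs <;>
    simp only [and_true, and_false, true_and, or_false, false_or, iff_false,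
      not_false_eq_true] <;> omega

theorem isHamiltonianCycleFactor_ofRel_zigzagRel (hM : 3 ≤ M) :
    IsHamiltonianCycleFactor (CM2.ofRel M (zigzagRel M)) := by
  rw [← comap_zigzag_cycleGraph hM]
  exact .of_iso (Iso.comap _ _) (isHamiltonianCycleFactor_cycleGraph (by omega))

theorem CM2.sdiff_ofRel_zigzagRel (hM : 3 ≤ M) :
    CM2 M \ CM2.ofRel M (zigzagRel M) =
      (CM2.ofRel M (zigzagRel M)).comap (CM2.fiberShift fun a => (a.val + 1 : ℕ)) := by
  rw [CM2.sdiff_ofRel hM, CM2.comap_fiberShift_ofRel]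
  congr
  funext a x y
  exact propext (not_zigzagRel_iff a x y)

end zigzag

/-- For every `M ≥ 3`, the 4-regular graph `C_M[2]` has a
Hamiltonian factorization: its edge set partitions into two Hamiltonian cycles. -/
theorem stmt_11 (M : ℕ) (hM : 3 ≤ M) :
    ∃ H₁ H₂ : SimpleGraph (ZMod M × ZMod 2),
      IsHamiltonianCycleFactor H₁ ∧ IsHamiltonianCycleFactor H₂ ∧
      Disjoint H₁.edgeSet H₂.edgeSet ∧
      H₁.edgeSet ∪ H₂.edgeSet = (CM2 M).edgeSet := by
  have : NeZero M := ⟨by omega⟩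
  have hC := isHamiltonianCycleFactor_ofRel_zigzagRel hM
  refine ⟨_, CM2 M \ CM2.ofRel M (zigzagRel M), hC, ?_, ?_, ?_⟩
  · rw [CM2.sdiff_ofRel_zigzagRel hM]
    exact .of_iso (Iso.comap _ _) hC
  · rw [edgeSet_sdiff]
    exact Set.disjoint_sdiff_right
  · rw [edgeSet_sdiff]
    exact Set.union_sdiff_cancel (edgeSet_mono (CM2.ofRel_le _))
end

section
/- Let n ≥ 4 be even and M ≥ 3 with Mn ≡ 0 (mod 4). Then the 6-regular Cayley graph cay(ℤ_M × ℤ_n, {(1, n/2 − 1), (1, n/2), (1, n/2 + 1)}) is connected. -/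
/-- The Cayley graph of an additive group `Γ` with connection set `S`. -/
def cayleyGraph (Γ : Type*) [AddCommGroup Γ] (S : Set Γ) : SimpleGraph Γ :=
  SimpleGraph.fromRel (fun a b => b - a ∈ S)

/-!
`(0, 1) = (1, n/2 + 1) - (1, n/2)`, and `(1, n/2)` together with `(0, 1)` generates
`ℤ_M × ℤ_n`. A Cayley graph whose connection set generates the group is connected,
because the `g` with `a + g` reachable from `a` for every `a` form a subgroup containing it.
-/

section CayleyGraph

variable {Γ : Type*} [AddCommGroup Γ] {S : Set Γ}

theorem cayleyGraph_reachable_add_of_mem {s : Γ} (hs : s ∈ S) (a : Γ) :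
    (cayleyGraph Γ S).Reachable a (a + s) := by
  by_cases hs0 : s = 0
  · rw [hs0, add_zero]
  · refine SimpleGraph.Adj.reachable ⟨?_, Or.inl ?_⟩
    · simpa using hs0
    · simpa using hs

theorem cayleyGraph_reachable_add_of_mem_closure {g : Γ} (hg : g ∈ AddSubgroup.closure S)
    (a : Γ) : (cayleyGraph Γ S).Reachable a (a + g) := by
  induction hg using AddSubgroup.closure_induction generalizing a with
  | mem s hs => exact cayleyGraph_reachable_add_of_mem hs a
  | zero => rw [add_zero]
  | add g h _ _ ihg ihh => simpa only [add_assoc] using (ihg a).trans (ihh (a + g))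
  | neg g _ ihg => simpa only [sub_eq_add_neg, neg_add_cancel_right] using (ihg (a - g)).symm

theorem cayleyGraph_connected_of_closure_eq_top (hS : AddSubgroup.closure S = ⊤) :
    (cayleyGraph Γ S).Connected := by
  refine ⟨fun a b => ?_⟩
  simpa only [add_sub_cancel] using
    cayleyGraph_reachable_add_of_mem_closure (g := b - a) (by simp [hS]) a

end CayleyGraph

theorem ZMod.closure_prod_one_zero_one_eq_top (m n : ℕ) (c : ZMod n) :
    AddSubgroup.closure {((1 : ZMod m), c), (0, 1)} = ⊤ := by
  refine eq_top_iff.mpr fun ⟨x, y⟩ _ => ?_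
  obtain ⟨k, rfl⟩ := ZMod.intCast_surjective x
  obtain ⟨l, hl⟩ := ZMod.intCast_surjective (y - (k : ZMod n) * c)
  have hxy : ((k : ZMod m), y) = k • ((1 : ZMod m), c) + l • ((0 : ZMod m), (1 : ZMod n)) := by
    ext <;> simp [hl]
  rw [hxy]
  exact add_mem (zsmul_mem (AddSubgroup.subset_closure (by simp)) k)
    (zsmul_mem (AddSubgroup.subset_closure (by simp)) l)

theorem stmt_19_general (M n : ℕ) :
    (cayleyGraph (ZMod M × ZMod n)
      {((1 : ZMod M), ((n / 2 : ℕ) : ZMod n) - 1),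
       ((1 : ZMod M), ((n / 2 : ℕ) : ZMod n)),
       ((1 : ZMod M), ((n / 2 : ℕ) : ZMod n) + 1)}).Connected := by
  set c : ZMod n := ((n / 2 : ℕ) : ZMod n)
  apply cayleyGraph_connected_of_closure_eq_top
  rw [eq_top_iff, ← ZMod.closure_prod_one_zero_one_eq_top M n c, AddSubgroup.closure_le]
  have hc : ((1 : ZMod M), c) ∈ AddSubgroup.closure {((1 : ZMod M), c - 1), (1, c), (1, c + 1)} :=
    AddSubgroup.subset_closure (by simp)
  have hc1 : ((1 : ZMod M), c + 1) ∈
      AddSubgroup.closure {((1 : ZMod M), c - 1), (1, c), (1, c + 1)} :=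
    AddSubgroup.subset_closure (by simp)
  rintro _ (rfl | rfl)
  · exact hc
  · simpa using sub_mem hc1 hc

/-- For even `n ≥ 4` and `M ≥ 3` with `Mn ≡ 0 (mod 4)`, the 6-regular
Cayley graph `cay(ℤ_M × ℤ_n, {(1, n/2 − 1), (1, n/2), (1, n/2 + 1)})` is connected. -/
theorem stmt_19 (M n : ℕ) (hM : 3 ≤ M) (hn : 4 ≤ n) (hne : Even n)
    (h4 : M * n % 4 = 0) :
    (cayleyGraph (ZMod M × ZMod n)
      {((1 : ZMod M), ((n / 2 : ℕ) : ZMod n) - 1),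
       ((1 : ZMod M), ((n / 2 : ℕ) : ZMod n)),
       ((1 : ZMod M), ((n / 2 : ℕ) : ZMod n) + 1)}).Connected :=
  stmt_19_general M n
end
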